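/- arXiv:1806.00431 — 2 statements merged into one kernel-verified Lean document; each statement's English description precedes it below -/
import Mathlib

section
/- Let K ⊆ ℝⁿ, let u∞ : K × [0,∞) → ℝ be such that t ↦ u∞(x,t) is continuous for each x ∈ K, let v∞ ∈ ℝ and let N be a positive integer. Suppose that for every prime number p and all (x,t) ∈ K × [0,∞), u∞(x, t + 1/(N·p)) = u∞(x,t) + v∞·(1/(N·p)). Then for all x ∈ K, all t ≥ 0 and all τ ≥ 0, u∞(x, t+τ) = u∞(x,t) + v∞·τ. -/
open Filter Set Topology

/-- translation-extension step of Lemma 3.9. A function, continuous in time,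
that translates with speed `v∞` along each time step `1/(N·p)` with `p` prime, translates with
speed `v∞` along every nonnegative time. -/
theorem translation_extension
    {n : ℕ} (K : Set (EuclideanSpace ℝ (Fin n)))
    (uInf : EuclideanSpace ℝ (Fin n) → ℝ → ℝ)
    (hcont : ∀ x ∈ K, ContinuousOn (uInf x) (Ici 0))
    (vInf : ℝ) (N : ℕ) (hN : 0 < N)
    (hstep : ∀ p : ℕ, p.Prime → ∀ x ∈ K, ∀ t ≥ (0:ℝ),
      uInf x (t + 1 / ((N : ℝ) * (p : ℝ))) = uInf x t + vInf * (1 / ((N : ℝ) * (p : ℝ)))) :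
    ∀ x ∈ K, ∀ t ≥ (0:ℝ), ∀ τ ≥ (0:ℝ), uInf x (t + τ) = uInf x t + vInf * τ := by
  intro x hx t ht τ hτ
  -- iterate the step lemma
  have key : ∀ p : ℕ, p.Prime → ∀ k : ℕ, ∀ s, s ≥ (0:ℝ) →
      uInf x (s + (k : ℝ) * (1 / ((N:ℝ) * p))) = uInf x s + vInf * ((k:ℝ) * (1/((N:ℝ)*p))) := by
    intro p hp k
    have hpos : (0:ℝ) < (N:ℝ) * p := by
      have := hp.pos
      positivity
    induction k with
    | zero => intro s hs; simp
    | succ k ih =>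
      intro s hs
      have h1 : s + ((k:ℝ)+1) * (1/((N:ℝ)*p)) = (s + (k:ℝ)*(1/((N:ℝ)*p))) + 1/((N:ℝ)*p) := by
        ring
      have hs' : s + (k:ℝ)*(1/((N:ℝ)*p)) ≥ 0 := by positivity
      push_cast
      rw [h1, hstep p hp x hx _ hs', ih s hs]
      ring
  -- the sequence of primes
  set P : ℕ → ℕ := fun j => Nat.nth Nat.Prime j with hP
  have hPprime : ∀ j, (P j).Prime := fun j => Nat.prime_nth_prime j
  have hPmono : StrictMono P := Nat.nth_strictMono Nat.infinite_setOf_prime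
  have hPtop : Tendsto (fun j => ((N:ℝ) * (P j))) atTop atTop := by
    apply Tendsto.const_mul_atTop (by exact_mod_cast hN)
    exact tendsto_natCast_atTop_atTop.comp hPmono.tendsto_atTop
  have hPpos : ∀ j, (0:ℝ) < (N:ℝ) * (P j) := fun j => by
    have := (hPprime j).pos
    positivity
  -- approximating sequence
  set a : ℕ → ℝ := fun j => (⌊τ * ((N:ℝ) * (P j))⌋₊ : ℝ) * (1 / ((N:ℝ) * (P j))) with ha
  have hanonneg : ∀ j, 0 ≤ a j := fun j => by
    have := hPpos j
    positivity
  have hainv : Tendsto (fun j => 1 / ((N:ℝ) * (P j))) atTop (𝓝 0) :=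
    tendsto_const_nhds.div_atTop hPtop
  have halim : Tendsto a atTop (𝓝 τ) := by
    have hub : ∀ j, a j ≤ τ := fun j => by
      have h1 : (⌊τ * ((N:ℝ) * (P j))⌋₊ : ℝ) ≤ τ * ((N:ℝ) * (P j)) :=
        Nat.floor_le (by have := (hPpos j).le; positivity)
      have hp := hPpos j
      show (⌊τ * ((N:ℝ) * (P j))⌋₊ : ℝ) * (1 / ((N:ℝ) * (P j))) ≤ τ
      rw [mul_one_div, div_le_iff₀ hp]
      exact h1
    have hlb : ∀ j, τ - 1 / ((N:ℝ) * (P j)) ≤ a j := fun j => by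
      have h1 : τ * ((N:ℝ) * (P j)) - 1 ≤ (⌊τ * ((N:ℝ) * (P j))⌋₊ : ℝ) :=
        (Nat.sub_one_lt_floor _).le
      have hp := hPpos j
      show τ - 1 / ((N:ℝ) * (P j)) ≤ (⌊τ * ((N:ℝ) * (P j))⌋₊ : ℝ) * (1 / ((N:ℝ) * (P j)))
      rw [mul_one_div, le_div_iff₀ hp, sub_mul, one_div, inv_mul_cancel₀ hp.ne']
      exact h1
    have h1 : Tendsto (fun j => τ - 1 / ((N:ℝ) * (P j))) atTop (𝓝 τ) := by
      simpa using tendsto_const_nhds.sub hainv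
    exact tendsto_of_tendsto_of_tendsto_of_le_of_le h1 tendsto_const_nhds hlb hub
  -- continuity of uInf x within Ici 0 at t + τ
  have htτ : t + τ ∈ Ici (0:ℝ) := by simp; linarith
  have hc : ContinuousWithinAt (uInf x) (Ici 0) (t + τ) := hcont x hx _ htτ
  have hseq : Tendsto (fun j => t + a j) atTop (𝓝[Ici (0:ℝ)] (t + τ)) := by
    rw [tendsto_nhdsWithin_iff]
    refine ⟨tendsto_const_nhds.add halim, Eventually.of_forall fun j => ?_⟩
    have := hanonneg j
    simp only [mem_Ici]; linarith
  have hlimL : Tendsto (fun j => uInf x (t + a j)) atTop (𝓝 (uInf x (t + τ))) :=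
    hc.tendsto.comp hseq
  have heq : ∀ j, uInf x (t + a j) = uInf x t + vInf * a j := fun j =>
    key (P j) (hPprime j) ⌊τ * ((N:ℝ) * (P j))⌋₊ t ht
  have hlimR : Tendsto (fun j => uInf x t + vInf * a j) atTop (𝓝 (uInf x t + vInf * τ)) :=
    tendsto_const_nhds.add (tendsto_const_nhds.mul halim)
  have := hlimL.congr (fun j => heq j)
  exact tendsto_nhds_unique this hlimR
end

section
/- For every bounded convex open set D ⊂ ℝⁿ there is a constant c(D) > 0 such that for every function f that is three times continuously differentiable on a neighborhood of D̄: (sup_{D̄} ‖D²f‖)² ≤ c(D) · (sup_{D̄} ‖Df‖) · (sup_{D̄} ‖D³f‖ + sup_{D̄} ‖D²f‖). -/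
/-!
Put `g = Df` and `Mₖ = sup_{D̄} ‖Dᵏf‖`. Taylor's formula for `g` gives
`‖D²f(x) (y - x)‖ ≤ 2 M₁ + M₃ ‖y - x‖²` for all `x, y ∈ D̄`. Fix a ball `B(z, r) ⊆ D`; for a unit
vector `e` and `l ∈ (0, 1]` the points `y± = x + l (z ± r e - x)` lie in `D̄` and
`y₊ - y₋ = 2 l r e`, so `M₂ ≤ a M₁ / l + b M₃ l` with `a, b` depending only on `r` and the
size of `D`.
Optimizing in `l` gives `M₂² ≲ M₁ M₃` when the optimal `l` is at most `1`, and `M₂ ≲ M₁`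
otherwise; the term `M₂` on the right-hand side covers the second case.
-/

open Set

/-- Supremum of a real-valued function over a set. -/
noncomputable def supOn {X : Type*} (S : Set X) (g : X → ℝ) : ℝ := sSup (g '' S)

open Metric

section supOn

variable {X : Type*} {S : Set X} {φ : X → ℝ} {C : ℝ}

theorem le_supOn (hφ : BddAbove (φ '' S)) {x : X} (hx : x ∈ S) : φ x ≤ supOn S φ :=
  le_csSup hφ (mem_image_of_mem φ hx)

theorem supOn_le (hS : S.Nonempty) (h : ∀ x ∈ S, φ x ≤ C) : supOn S φ ≤ C :=
  csSup_le (hS.image φ) (forall_mem_image.2 h)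

theorem supOn_nonneg (hφ : BddAbove (φ '' S)) (hS : S.Nonempty) (h : ∀ x ∈ S, 0 ≤ φ x) :
    0 ≤ supOn S φ :=
  let ⟨x, hx⟩ := hS
  (h x hx).trans (le_supOn hφ hx)

end supOn

theorem sq_le_of_forall_le_div_add_mul {a b M₁ M₂ M₃ : ℝ} (ha : 0 < a) (hb : 0 < b)
    (hM₁ : 0 ≤ M₁) (hM₂ : 0 ≤ M₂) (hM₃ : 0 ≤ M₃)
    (H : ∀ l ∈ Ioc (0 : ℝ) 1, M₂ ≤ a * M₁ / l + b * M₃ * l) :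
    M₂ ^ 2 ≤ 2 * a * (1 + 2 * b) * M₁ * (M₃ + M₂) := by
  rcases hM₂.eq_or_lt with rfl | hM₂pos
  · norm_num
    positivity
  set S := M₃ + M₂
  have hS : 0 < 2 * b * S := by positivity
  have hconst : 2 * a * M₁ * S ≤ 2 * a * (1 + 2 * b) * M₁ * S := by
    nlinarith [show 0 ≤ 2 * a * M₁ * S * (2 * b) by positivity]
  rcases le_or_gt (M₂ / (2 * b * S)) 1 with hl₁ | hl₁
  · -- `l` is chosen so that `b S l = M₂ / 2`
    set l := M₂ / (2 * b * S)
    have hl₀ : 0 < l := by positivity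
    have hl : l * (2 * b * S) = M₂ := div_mul_cancel₀ _ hS.ne'
    have h := H l ⟨hl₀, hl₁⟩
    rw [div_add' _ _ _ hl₀.ne', le_div_iff₀ hl₀] at h
    have h₃ : b * M₃ * l * l * (2 * b * S) ≤ M₂ ^ 2 / 2 :=
      calc b * M₃ * l * l * (2 * b * S) = b * M₃ * l * M₂ := by rw [mul_assoc _ l, hl]
        _ ≤ b * S * l * M₂ := by gcongr; linarith
        _ = M₂ ^ 2 / 2 := by linear_combination (M₂ / 2) * hl
    have hsq : M₂ ^ 2 = M₂ * l * (2 * b * S) := by rw [mul_assoc, hl, sq]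
    nlinarith [mul_le_mul_of_nonneg_right h hS.le]
  · have h := H 1 ⟨one_pos, le_rfl⟩
    rw [one_lt_div hS] at hl₁
    have h₁ : M₂ ≤ 2 * a * M₁ := by nlinarith
    nlinarith

variable {E F : Type*} [NormedAddCommGroup E] [NormedSpace ℝ E]
  [NormedAddCommGroup F] [NormedSpace ℝ F]

section Taylor

variable {g : E → F} {g' : E → E →L[ℝ] F} {g'' : E → E →L[ℝ] E →L[ℝ] F} {s : Set E}
  {C M : ℝ} {x y : E}

theorem Convex.norm_sub_sub_fderiv_le (hs : Convex ℝ s)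
    (hg : ∀ t ∈ s, HasFDerivWithinAt g (g' t) s t)
    (hg' : ∀ t ∈ s, HasFDerivWithinAt g' (g'' t) s t) (hC : ∀ t ∈ s, ‖g'' t‖ ≤ C)
    (hx : x ∈ s) (hy : y ∈ s) : ‖g y - g x - g' x (y - x)‖ ≤ C * ‖y - x‖ ^ 2 := by
  have hseg : segment ℝ x y ⊆ s := hs.segment_subset hx hy
  have hC₀ : 0 ≤ C := (norm_nonneg (g'' x)).trans (hC x hx)
  have hslope : ∀ t ∈ segment ℝ x y, ‖g' t - g' x‖ ≤ C * ‖y - x‖ := fun t ht =>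
    calc ‖g' t - g' x‖ ≤ C * ‖t - x‖ :=
          hs.norm_image_sub_le_of_norm_hasFDerivWithin_le hg' hC hx (hseg ht)
      _ ≤ C * ‖y - x‖ := by gcongr; exact norm_sub_le_of_mem_segment ht
  calc ‖g y - g x - g' x (y - x)‖ ≤ C * ‖y - x‖ * ‖y - x‖ :=
        (convex_segment x y).norm_image_sub_le_of_norm_hasFDerivWithin_le'
          (fun t ht => (hg t (hseg ht)).mono hseg) hslope
          (left_mem_segment ℝ x y) (right_mem_segment ℝ x y)
    _ = C * ‖y - x‖ ^ 2 := by ring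

theorem Convex.norm_fderiv_apply_sub_le (hs : Convex ℝ s)
    (hg : ∀ t ∈ s, HasFDerivWithinAt g (g' t) s t)
    (hg' : ∀ t ∈ s, HasFDerivWithinAt g' (g'' t) s t) (hC : ∀ t ∈ s, ‖g'' t‖ ≤ C)
    (hM : ∀ t ∈ s, ‖g t‖ ≤ M) (hx : x ∈ s) (hy : y ∈ s) :
    ‖g' x (y - x)‖ ≤ 2 * M + C * ‖y - x‖ ^ 2 := by
  have hT := hs.norm_sub_sub_fderiv_le hg hg' hC hx hy
  calc ‖g' x (y - x)‖ = ‖g y - g x - (g y - g x - g' x (y - x))‖ := by rw [sub_sub_cancel]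
    _ ≤ ‖g y‖ + ‖g x‖ + ‖g y - g x - g' x (y - x)‖ :=
        (norm_sub_le _ _).trans (by gcongr; exact norm_sub_le _ _)
    _ ≤ 2 * M + C * ‖y - x‖ ^ 2 := by linarith [hM y hy, hM x hx]

end Taylor

theorem ContinuousLinearMap.opNorm_le_of_norm_apply_sub_le {K : Set E} {x z : E}
    {r d P Q l : ℝ} (A : E →L[ℝ] F) (hK : Convex ℝ K) (hr : 0 < r)
    (hball : closedBall z r ⊆ K) (hx : x ∈ K) (hxz : dist x z ≤ d) (hQ : 0 ≤ Q)
    (hl : l ∈ Ioc (0 : ℝ) 1) (hA : ∀ y ∈ K, ‖A (y - x)‖ ≤ P + Q * ‖y - x‖ ^ 2) :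
    ‖A‖ ≤ (P + Q * (l * (d + r)) ^ 2) / (l * r) := by
  have hP : 0 ≤ P := by simpa using hA x hx
  have hlr : 0 < l * r := mul_pos hl.1 hr
  have hsecant : ∀ u, ‖u‖ ≤ r → ‖A (l • (z + u - x))‖ ≤ P + Q * (l * (d + r)) ^ 2 := by
    intro u hu
    have hzu : z + u ∈ K := hball (by simpa [dist_eq_norm] using hu)
    have hnorm : ‖l • (z + u - x)‖ ≤ l * (d + r) := by
      rw [norm_smul, Real.norm_of_nonneg hl.1.le]
      refine mul_le_mul_of_nonneg_left ?_ hl.1.le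
      calc ‖z + u - x‖ = ‖(z - x) + u‖ := by abel_nf
        _ ≤ d + r := (norm_add_le _ _).trans (add_le_add (by rwa [← dist_eq_norm, dist_comm]) hu)
    calc ‖A (l • (z + u - x))‖ ≤ P + Q * ‖l • (z + u - x)‖ ^ 2 := by
          simpa using hA _ (hK.add_smul_sub_mem hx hzu ⟨hl.1.le, hl.2⟩)
      _ ≤ P + Q * (l * (d + r)) ^ 2 := by gcongr
  refine A.opNorm_le_of_unit_norm (by positivity) fun e he => ?_
  have hre : ‖r • e‖ ≤ r := by rw [norm_smul, he, Real.norm_of_nonneg hr.le, mul_one]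
  have hdiff : A (l • (z + r • e - x)) - A (l • (z + -(r • e) - x)) = (2 * (l * r)) • A e := by
    rw [← map_sub, ← map_smul]; congr 1; module
  rw [le_div_iff₀ hlr]
  have hsum := (norm_sub_le _ _).trans
    (add_le_add (hsecant _ hre) (hsecant _ ((norm_neg _).trans_le hre)))
  rw [hdiff, norm_smul, Real.norm_of_nonneg (by positivity)] at hsum
  linarith

theorem sq_supOn_norm_fderiv_le {K : Set E} {z : E} {r d : ℝ} {g : E → F}
    {g' : E → E →L[ℝ] F} {g'' : E → E →L[ℝ] E →L[ℝ] F} (hK : Convex ℝ K) (hKc : IsCompact K)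
    (hr : 0 < r) (hball : closedBall z r ⊆ K) (hKd : K ⊆ closedBall z d)
    (hg : ∀ t ∈ K, HasFDerivWithinAt g (g' t) K t)
    (hg' : ∀ t ∈ K, HasFDerivWithinAt g' (g'' t) K t)
    (hg'' : BddAbove ((fun x => ‖g'' x‖) '' K)) :
    (supOn K fun x => ‖g' x‖) ^ 2 ≤ 4 / r * (1 + 2 * (d + r) ^ 2 / r) *
      (supOn K fun x => ‖g x‖) * ((supOn K fun x => ‖g'' x‖) + supOn K fun x => ‖g' x‖) := by
  have hKne : K.Nonempty := ⟨z, hball (mem_closedBall_self hr.le)⟩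
  have hd : 0 ≤ d := dist_nonneg.trans (hKd (hball (mem_closedBall_self hr.le)))
  have hbdd_g : BddAbove ((fun x => ‖g x‖) '' K) :=
    hKc.bddAbove_image (ContinuousOn.norm fun t ht => (hg t ht).continuousWithinAt)
  have hbdd_g' : BddAbove ((fun x => ‖g' x‖) '' K) :=
    hKc.bddAbove_image (ContinuousOn.norm fun t ht => (hg' t ht).continuousWithinAt)
  set M₁ := supOn K fun x => ‖g x‖
  set M₂ := supOn K fun x => ‖g' x‖
  set M₃ := supOn K fun x => ‖g'' x‖
  have hM₃ : 0 ≤ M₃ := supOn_nonneg hg'' hKne fun t _ => norm_nonneg (g'' t)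
  calc M₂ ^ 2 ≤ 2 * (2 / r) * (1 + 2 * ((d + r) ^ 2 / r)) * M₁ * (M₃ + M₂) := by
        refine sq_le_of_forall_le_div_add_mul (by positivity) (by positivity)
          (supOn_nonneg hbdd_g hKne fun _ _ => norm_nonneg _)
          (supOn_nonneg hbdd_g' hKne fun _ _ => norm_nonneg _) hM₃ fun l hl => ?_
        refine supOn_le hKne fun x hx => ?_
        have hTaylor : ∀ y ∈ K, ‖g' x (y - x)‖ ≤ 2 * M₁ + M₃ * ‖y - x‖ ^ 2 := fun y hy =>
          hK.norm_fderiv_apply_sub_le hg hg' (fun t ht => le_supOn hg'' ht)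
            (fun t ht => le_supOn hbdd_g ht) hx hy
        calc ‖g' x‖ ≤ (2 * M₁ + M₃ * (l * (d + r)) ^ 2) / (l * r) :=
              (g' x).opNorm_le_of_norm_apply_sub_le hK hr hball hx (hKd hx) hM₃ hl hTaylor
          _ = 2 / r * M₁ / l + (d + r) ^ 2 / r * M₃ * l := by field_simp
    _ = _ := by ring

theorem ContDiffOn.hasFDerivWithinAt_fderiv {G : Type*} [NormedAddCommGroup G]
    [NormedSpace ℝ G] {φ : E → G} {n : WithTop ℕ∞} {s U : Set E} {t : E}
    (hφ : ContDiffOn ℝ n φ U) (hn : n ≠ 0) (hU : IsOpen U) (hsU : s ⊆ U) (ht : t ∈ s) :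
    HasFDerivWithinAt φ (fderiv ℝ φ t) s t :=
  ((hφ.differentiableOn hn).differentiableAt (hU.mem_nhds (hsU ht))).hasFDerivAt.hasFDerivWithinAt

theorem sq_supOn_norm_iteratedFDeriv_two_le {K U : Set E} {z : E} {r d : ℝ} {f : E → F}
    (hK : Convex ℝ K) (hKc : IsCompact K) (hr : 0 < r) (hball : closedBall z r ⊆ K)
    (hKd : K ⊆ closedBall z d) (hU : IsOpen U) (hKU : K ⊆ U) (hf : ContDiffOn ℝ 3 f U) :
    (supOn K fun x => ‖iteratedFDeriv ℝ 2 f x‖) ^ 2 ≤ 4 / r * (1 + 2 * (d + r) ^ 2 / r) *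
      (supOn K fun x => ‖iteratedFDeriv ℝ 1 f x‖) *
        ((supOn K fun x => ‖iteratedFDeriv ℝ 3 f x‖) +
          supOn K fun x => ‖iteratedFDeriv ℝ 2 f x‖) := by
  -- instance search alone does not find the norm on `E →L[ℝ] E →L[ℝ] E →L[ℝ] F`
  let : NormedAddCommGroup (E →L[ℝ] F) := ContinuousLinearMap.toNormedAddCommGroup
  let : NormedSpace ℝ (E →L[ℝ] F) := ContinuousLinearMap.toNormedSpace
  have hf₁ : ContDiffOn ℝ 2 (fderiv ℝ f) U := hf.fderiv_of_isOpen hU (by norm_num)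
  have hf₂ : ContDiffOn ℝ 1 (fderiv ℝ (fderiv ℝ f)) U := hf₁.fderiv_of_isOpen hU (by norm_num)
  have hnorm₁ : (fun x => ‖iteratedFDeriv ℝ 1 f x‖) = fun x => ‖fderiv ℝ f x‖ := by
    simp only [← norm_iteratedFDeriv_fderiv, norm_iteratedFDeriv_zero]
  have hnorm₂ : (fun x => ‖iteratedFDeriv ℝ 2 f x‖) = fun x => ‖fderiv ℝ (fderiv ℝ f) x‖ := by
    simp only [← norm_iteratedFDeriv_fderiv, norm_iteratedFDeriv_zero]
  have hnorm₃ : (fun x => ‖iteratedFDeriv ℝ 3 f x‖) =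
      fun x => ‖fderiv ℝ (fderiv ℝ (fderiv ℝ f)) x‖ := by
    simp only [← norm_iteratedFDeriv_fderiv, norm_iteratedFDeriv_zero]
  rw [hnorm₁, hnorm₂, hnorm₃]
  exact sq_supOn_norm_fderiv_le hK hKc hr hball hKd
    (fun t ht => hf₁.hasFDerivWithinAt_fderiv (by norm_num) hU hKU ht)
    (fun t ht => hf₂.hasFDerivWithinAt_fderiv (by norm_num) hU hKU ht)
    (hKc.bddAbove_image ((hf₂.continuousOn_fderiv_of_isOpen hU le_rfl).mono hKU).norm)

theorem hessian_interpolation_inequality_general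
    {n : ℕ} (D : Set (EuclideanSpace ℝ (Fin n)))
    (hD : IsOpen D) (hDconv : Convex ℝ D) (hDbd : Bornology.IsBounded D)
    (hDne : D.Nonempty) :
    ∃ c > (0:ℝ), ∀ (f : EuclideanSpace ℝ (Fin n) → ℝ)
      (U : Set (EuclideanSpace ℝ (Fin n))), IsOpen U → closure D ⊆ U →
      ContDiffOn ℝ 3 f U →
      (supOn (closure D) fun x => ‖iteratedFDeriv ℝ 2 f x‖) ^ 2 ≤
        c * (supOn (closure D) fun x => ‖iteratedFDeriv ℝ 1 f x‖) *
          ((supOn (closure D) fun x => ‖iteratedFDeriv ℝ 3 f x‖) +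
            (supOn (closure D) fun x => ‖iteratedFDeriv ℝ 2 f x‖)) := by
  obtain ⟨z, hz⟩ := hDne
  obtain ⟨r, hr, hball⟩ := nhds_basis_closedBall.mem_iff.mp (hD.mem_nhds hz)
  obtain ⟨d, hd⟩ := (isBounded_iff_subset_closedBall z).mp hDbd.closure
  exact ⟨_, by positivity, fun f U hU hDU hf => sq_supOn_norm_iteratedFDeriv_two_le hDconv.closure
    hDbd.isCompact_closure hr (hball.trans subset_closure) hd hU hDU hf⟩

/-- interior interpolation inequality (e3.4). On a bounded convex open set,
`(sup ‖D²f‖)² ≤ c(D) · sup ‖Df‖ · (sup ‖D³f‖ + sup ‖D²f‖)`. -/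
theorem hessian_interpolation_inequality
    {n : ℕ} (hn : 1 ≤ n) (D : Set (EuclideanSpace ℝ (Fin n)))
    (hD : IsOpen D) (hDconv : Convex ℝ D) (hDbd : Bornology.IsBounded D)
    (hDne : D.Nonempty) :
    ∃ c > (0:ℝ), ∀ (f : EuclideanSpace ℝ (Fin n) → ℝ)
      (U : Set (EuclideanSpace ℝ (Fin n))), IsOpen U → closure D ⊆ U →
      ContDiffOn ℝ 3 f U →
      (supOn (closure D) fun x => ‖iteratedFDeriv ℝ 2 f x‖) ^ 2 ≤
        c * (supOn (closure D) fun x => ‖iteratedFDeriv ℝ 1 f x‖) *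
          ((supOn (closure D) fun x => ‖iteratedFDeriv ℝ 3 f x‖) +
            (supOn (closure D) fun x => ‖iteratedFDeriv ℝ 2 f x‖)) :=
  hessian_interpolation_inequality_general D hD hDconv hDbd hDne
end
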